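/- arXiv:2208.05547 — 8 statements merged into one kernel-verified Lean document; each statement's English description precedes it below -/
import Mathlib

section
/- Let $X$ be a topological space, $Z$ a compact Hausdorff space, and $\phi : X \to \mathcal{K}(Z)$ a lower semi-continuous map into the nonempty compact subsets of $Z$ (i.e., for every open $U \subseteq Z$ the set $\{x \in X : \phi(x) \cap U \neq \emptyset\}$ is open). If $K$ is a compact $G_\delta$-subset of $Z$, then the set $\phi^{-1}(K) = \{x \in X : \phi(x) \cap K \neq \emptyset\}$ is a $G_\delta$-subset of $X$. -/
/-- If `φ : X → 𝒦(Z)` is a lower semi-continuous map into the nonempty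
compact subsets of a compact Hausdorff space `Z`, and `K ⊆ Z` is a compact `Gδ`-set, then
`φ⁻¹(K) = {x | φ x ∩ K ≠ ∅}` is a `Gδ`-subset of `X`. -/
theorem lsc_preimage_compact_Gdelta_isGdelta
    {X Z : Type*} [TopologicalSpace X] [TopologicalSpace Z]
    [CompactSpace Z] [T2Space Z]
    (φ : X → Set Z)
    (hne : ∀ x, (φ x).Nonempty)
    (hcomp : ∀ x, IsCompact (φ x))
    (hlsc : ∀ U : Set Z, IsOpen U → IsOpen {x | (φ x ∩ U).Nonempty})
    (K : Set Z) (hK : IsCompact K) (hKGδ : IsGδ K) :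
    IsGδ {x | (φ x ∩ K).Nonempty} := by
  obtain ⟨U, hUopen, hKU⟩ := hKGδ.eq_iInter_nat
  have hKcl : IsClosed K := hK.isClosed
  have hKsubU : ∀ n, K ⊆ U n := fun n => hKU ▸ Set.iInter_subset U n
  -- shrinking step, using normality of the compact Hausdorff space `Z`
  have hstep : ∀ W : Set Z, IsOpen W → K ⊆ W →
      ∃ V : Set Z, IsOpen V ∧ K ⊆ V ∧ closure V ⊆ W := fun W hW hKW =>
    normal_exists_closure_subset hKcl hW hKW
  choose g hg1 hg2 hg3 using hstep
  -- construct the nested sequence of open sets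
  let f : ℕ → {V : Set Z // IsOpen V ∧ K ⊆ V} := fun n =>
    Nat.rec ⟨U 0, hUopen 0, hKsubU 0⟩
      (fun n p => ⟨g (p.1 ∩ U (n + 1)) (p.2.1.inter (hUopen (n + 1)))
          (Set.subset_inter p.2.2 (hKsubU (n + 1))),
        hg1 _ _ _, hg2 _ _ _⟩) n
  set V : ℕ → Set Z := fun n => (f n).1 with hVdef
  have hVopen : ∀ n, IsOpen (V n) := fun n => (f n).2.1
  have hKV : ∀ n, K ⊆ V n := fun n => (f n).2.2
  have hV0 : V 0 = U 0 := rfl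
  have hnest : ∀ n, closure (V (n + 1)) ⊆ V n ∩ U (n + 1) := fun n => hg3 _ _ _
  -- `K` is the intersection of the closures of the `V n`
  have hKeq : K = ⋂ n, closure (V n) := by
    apply Set.Subset.antisymm
    · exact Set.subset_iInter fun n => (hKV n).trans subset_closure
    · intro z hz
      rw [hKU]
      refine Set.mem_iInter.2 fun n => ?_
      cases n with
      | zero =>
        have h1 : z ∈ closure (V 1) := Set.mem_iInter.1 hz 1
        have : z ∈ V 0 := ((hnest 0) h1).1
        rwa [hV0] at this
      | succ n =>
        exact ((hnest n) (Set.mem_iInter.1 hz (n + 1))).2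
  -- the preimage is the intersection of the preimages of the `V n`
  have hset : {x | (φ x ∩ K).Nonempty} = ⋂ n, {x | (φ x ∩ V n).Nonempty} := by
    ext x
    simp only [Set.mem_iInter, Set.mem_setOf_eq]
    constructor
    · intro ⟨z, hz⟩ n
      exact ⟨z, hz.1, hKV n hz.2⟩
    · intro h
      have hcantor : (⋂ n, φ x ∩ closure (V n)).Nonempty := by
        apply IsCompact.nonempty_iInter_of_sequence_nonempty_isCompact_isClosed
        · intro n
          exact Set.inter_subset_inter_right _
            ((hnest n).trans (Set.inter_subset_left.trans subset_closure))
        · intro n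
          obtain ⟨z, hz1, hz2⟩ := h n
          exact ⟨z, hz1, subset_closure hz2⟩
        · exact (hcomp x).inter_right isClosed_closure
        · exact fun n => ((hcomp x).inter_right isClosed_closure).isClosed
      obtain ⟨z, hz⟩ := hcantor
      simp only [Set.mem_iInter, Set.mem_inter_iff] at hz
      exact ⟨z, (hz 0).1, hKeq ▸ Set.mem_iInter.2 fun n => (hz n).2⟩
  rw [hset]
  exact .iInter_of_isOpen fun n => hlsc (V n) (hVopen n)
end

section
/- A topological space $X$ is Menger if and only if $X$ is Lindelöf and every separable metrizable continuous image of $X$ is Menger. (In particular, the nontrivial direction: if $X$ is Lindelöf and every continuous image of $X$ in a separable metrizable space is Menger, then $X$ itself is Menger.) -/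
def IsMenger (X : Type*) [TopologicalSpace X] : Prop :=
  ∀ U : ℕ → Set (Set X),
    (∀ n, (∀ u ∈ U n, IsOpen u) ∧ ⋃₀ U n = Set.univ) →
    ∃ V : ℕ → Set (Set X),
      (∀ n, V n ⊆ U n ∧ (V n).Finite) ∧ ⋃ n, ⋃₀ V n = Set.univ

open Set TopologicalSpace unitInterval

/-- Telgársky. A Tychonoff space `X` is Menger iff it is Lindelöf and
every separable metrizable continuous image of `X` is Menger. -/
theorem menger_iff_lindelof_and_projectivelyMenger
    (X : Type*) [TopologicalSpace X] [T35Space X] :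
    IsMenger X ↔
      (LindelofSpace X ∧
        ∀ (M : Type) (tM : TopologicalSpace M),
          @TopologicalSpace.SeparableSpace M tM →
          @TopologicalSpace.MetrizableSpace M tM →
          ∀ f : X → M, @Continuous X M _ tM f → Function.Surjective f →
            @IsMenger M tM) := by
  classical
  constructor
  · intro hM
    constructor
    · -- Menger implies Lindelöf
      constructor
      apply isLindelof_of_countable_subcover
      intro ι U hUo hsU
      cases isEmpty_or_nonempty ι with
      | inl h =>
        refine ⟨∅, countable_empty, ?_⟩
        simpa using hsU
      | inr h =>
        obtain ⟨V, hV, hVcov⟩ := hM (fun _ => Set.range U) (fun n =>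
          ⟨by rintro u ⟨i, rfl⟩; exact hUo i,
           by rw [Set.sUnion_range]; exact eq_univ_of_univ_subset hsU⟩)
        set g : Set X → ι := fun v => if h : ∃ i, U i = v then h.choose else Classical.arbitrary ι
          with hg
        have hgU : ∀ v ∈ Set.range U, U (g v) = v := by
          intro v hv
          obtain ⟨i, rfl⟩ := hv
          have h : ∃ j, U j = U i := ⟨i, rfl⟩
          simp only [hg, dif_pos h]
          exact h.choose_spec
        refine ⟨⋃ n, g '' (V n), countable_iUnion (fun n => ((hV n).2.image g).countable), ?_⟩
        intro x _
        have hx : x ∈ ⋃ n, ⋃₀ V n := hVcov ▸ mem_univ x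
        obtain ⟨_, ⟨n, rfl⟩, v, hv, hxv⟩ := hx
        exact mem_biUnion (mem_iUnion.mpr ⟨n, mem_image_of_mem g hv⟩)
          (by rw [hgU v ((hV n).1 hv)]; exact hxv)
    · -- Menger is preserved by continuous surjective images
      intro M tM _ _ f hf hsurj U hU
      obtain ⟨V, hV, hVcov⟩ := hM (fun n => (f ⁻¹' ·) '' (U n)) (fun n =>
        ⟨by rintro u ⟨w, hw, rfl⟩; exact (hU n).1 w hw |>.preimage hf,
         by
          apply eq_univ_of_forall; intro x
          have hx : f x ∈ ⋃₀ U n := (hU n).2 ▸ mem_univ _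
          obtain ⟨w, hw, hxw⟩ := hx
          exact ⟨f ⁻¹' w, ⟨w, hw, rfl⟩, hxw⟩⟩)
      set g : ℕ → Set X → Set M := fun n v =>
        if h : ∃ w ∈ U n, f ⁻¹' w = v then h.choose else ∅ with hg
      have hgmem : ∀ n v, v ∈ (f ⁻¹' ·) '' (U n) → g n v ∈ U n ∧ f ⁻¹' (g n v) = v := by
        intro n v hv
        obtain ⟨w, hw, rfl⟩ := hv
        have h : ∃ w' ∈ U n, f ⁻¹' w' = f ⁻¹' w := ⟨w, hw, rfl⟩
        simp only [hg, dif_pos h]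
        exact ⟨h.choose_spec.1, h.choose_spec.2⟩
      refine ⟨fun n => g n '' (V n), fun n =>
        ⟨by rintro _ ⟨v, hv, rfl⟩; exact (hgmem n v ((hV n).1 hv)).1, (hV n).2.image _⟩, ?_⟩
      apply eq_univ_of_forall; intro y
      obtain ⟨x, rfl⟩ := hsurj y
      have hx : x ∈ ⋃ n, ⋃₀ V n := hVcov ▸ mem_univ x
      obtain ⟨_, ⟨n, rfl⟩, v, hv, hxv⟩ := hx
      refine mem_iUnion.mpr ⟨n, g n v, mem_image_of_mem _ hv, ?_⟩
      have := (hgmem n v ((hV n).1 hv)).2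
      rw [← this] at hxv
      exact hxv
  · rintro ⟨hL, hproj⟩
    cases isEmpty_or_nonempty X with
    | inl h =>
      intro U _
      refine ⟨fun _ => ∅, fun n => ⟨empty_subset _, finite_empty⟩, ?_⟩
      apply eq_univ_of_forall; intro x; exact isEmptyElim x
    | inr h =>
      intro U hU
      have hx : ∀ (n : ℕ) (x : X), ∃ u ∈ U n, x ∈ u := by
        intro n x
        have : x ∈ ⋃₀ U n := (hU n).2 ▸ mem_univ x
        exact this
      choose u hu hxu using hx
      have hcr : ∀ (n : ℕ) (x : X), ∃ g : X → I, Continuous g ∧ g x = 0 ∧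
          Set.EqOn g 1 (u n x)ᶜ := by
        intro n x
        exact CompletelyRegularSpace.completely_regular x (u n x)ᶜ
          (((hU n).1 _ (hu n x)).isClosed_compl) (by simp [hxu n x])
      choose g hgc hg0 hg1 using hcr
      have hcov : ∀ n : ℕ, ∃ e : ℕ → X,
          (univ : Set X) ⊆ ⋃ k, {y | g n (e k) y ≠ 1} := by
        intro n
        apply hL.isLindelof_univ.indexed_countable_subcover (fun x => {y | g n x y ≠ 1})
        · intro x
          exact isOpen_ne.preimage (hgc n x)
        · intro x _
          refine mem_iUnion.mpr ⟨x, ?_⟩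
          simp only [mem_setOf_eq, hg0 n x]
          exact fun h => zero_ne_one h
      choose e he using hcov
      set F : X → (ℕ × ℕ → ℝ) := fun x p => (g p.1 (e p.1 p.2) x : ℝ) with hF
      have hFc : Continuous F :=
        continuous_pi fun p => continuous_subtype_val.comp (hgc _ _)
      have hMM : IsMenger (Set.range F) :=
        hproj (Set.range F) _ inferInstance inferInstance
          (Set.rangeFactorization F) (hFc.subtype_mk _) rangeFactorization_surjective
      set W : ℕ → Set (Set (Set.range F)) := fun n =>
        Set.range (fun k : ℕ => {y : Set.range F | (y : ℕ × ℕ → ℝ) (n, k) ≠ 1}) with hW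
      obtain ⟨V, hV, hVcov⟩ := hMM W (fun n =>
        ⟨by
          rintro _ ⟨k, rfl⟩
          exact isOpen_ne.preimage ((continuous_apply (n, k)).comp continuous_subtype_val),
         by
          apply eq_univ_of_forall
          rintro ⟨_, x, rfl⟩
          have hxk : x ∈ ⋃ k, {y | g n (e n k) y ≠ 1} := he n (mem_univ x)
          obtain ⟨_, ⟨k, rfl⟩, hxk⟩ := hxk
          refine ⟨_, ⟨k, rfl⟩, ?_⟩
          simp only [mem_setOf_eq]
          intro hcontra
          exact hxk (Subtype.ext (by simpa [hF] using hcontra))⟩)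
      set pk : ℕ → Set (Set.range F) → ℕ := fun n v =>
        if h : ∃ k : ℕ, {y : Set.range F | (y : ℕ × ℕ → ℝ) (n, k) ≠ 1} = v
        then h.choose else 0 with hpk
      have hpkv : ∀ n v, v ∈ V n →
          {y : Set.range F | (y : ℕ × ℕ → ℝ) (n, pk n v) ≠ 1} = v := by
        intro n v hv
        have hvW : v ∈ W n := (hV n).1 hv
        obtain ⟨k, hk⟩ := hvW
        have h : ∃ k : ℕ, {y : Set.range F | (y : ℕ × ℕ → ℝ) (n, k) ≠ 1} = v := ⟨k, hk⟩
        simp only [hpk, dif_pos h]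
        exact h.choose_spec
      refine ⟨fun n => (fun v => u n (e n (pk n v))) '' (V n), fun n =>
        ⟨by rintro _ ⟨v, hv, rfl⟩; exact hu n _, (hV n).2.image _⟩, ?_⟩
      apply eq_univ_of_forall; intro x
      have hx : Set.rangeFactorization F x ∈ ⋃ n, ⋃₀ V n := hVcov ▸ mem_univ _
      obtain ⟨_, ⟨n, rfl⟩, v, hv, hxv⟩ := hx
      refine mem_iUnion.mpr ⟨n, u n (e n (pk n v)), mem_image_of_mem _ hv, ?_⟩
      by_contra hxu'
      have h1 : g n (e n (pk n v)) x = 1 := hg1 n (e n (pk n v)) hxu'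
      rw [← hpkv n v hv] at hxv
      exact hxv (by simp [Set.rangeFactorization, hF, h1])
end

section
/- Let $\varphi : C_p(X) \to C_p(Y)$ be a continuous linear map between spaces of continuous real-valued functions with the topology of pointwise convergence. For $y \in Y$, define the support $\operatorname{supp}_\varphi(y)$ as the set of $x \in X$ such that for every open neighborhood $U$ of $x$ there exists $f \in C_p(X)$ with $f[X \setminus U] \subseteq \{0\}$ and $\varphi(f)(y) \neq 0$. Then the set-valued map $y \mapsto \operatorname{supp}_\varphi(y)$ is lower semi-continuous: for every open $U \subseteq X$, the set $\{y \in Y : \operatorname{supp}_\varphi(y) \cap U \neq \emptyset\}$ is open in $Y$. -/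
/-- The topology of pointwise convergence on `C(X, ℝ)`. -/
def CpTop (X : Type) [TopologicalSpace X] : TopologicalSpace C(X, ℝ) :=
  TopologicalSpace.induced (fun f => (f : X → ℝ)) Pi.topologicalSpace

/-- Continuity of a linear map `C_p(X) → C_p(Y)` with respect to the topologies of
pointwise convergence. -/
def CpContinuous {X Y : Type} [TopologicalSpace X] [TopologicalSpace Y]
    (φ : C(X, ℝ) →ₗ[ℝ] C(Y, ℝ)) : Prop :=
  @Continuous _ _ (CpTop X) (CpTop Y) φ

/-- The support of `y` with respect to `φ`: all `x ∈ X` such that every open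
neighbourhood `U` of `x` admits `f` vanishing off `U` with `φ f y ≠ 0`. -/
def suppMap {X Y : Type} [TopologicalSpace X] [TopologicalSpace Y]
    (φ : C(X, ℝ) →ₗ[ℝ] C(Y, ℝ)) (y : Y) : Set X :=
  {x | ∀ U : Set X, IsOpen U → x ∈ U →
    ∃ f : C(X, ℝ), (∀ z, z ∉ U → f z = 0) ∧ φ f y ≠ 0}

/-- Continuity of `φ` gives, for each `y`, a finite set `F ⊆ X` such that any `h`
vanishing on `F` satisfies `φ h y = 0`. -/
lemma cp_finite_support {X Y : Type} [TopologicalSpace X] [TopologicalSpace Y]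
    (φ : C(X, ℝ) →ₗ[ℝ] C(Y, ℝ)) (hφ : CpContinuous φ) (y : Y) :
    ∃ F : Finset X, ∀ h : C(X, ℝ), (∀ x ∈ F, h x = 0) → φ h y = 0 := by
  letI : TopologicalSpace C(X, ℝ) := CpTop X
  letI : TopologicalSpace C(Y, ℝ) := CpTop Y
  have hTy : Continuous fun g : C(X, ℝ) => φ g y := by
    have h1 : Continuous fun g : C(Y, ℝ) => g y :=
      (continuous_apply y).comp continuous_induced_dom
    exact h1.comp hφ
  have h0 : (fun g : C(X, ℝ) => φ g y) ⁻¹' Set.Ioo (-1) 1 ∈ nhds (0 : C(X, ℝ)) := by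
    have := hTy.continuousAt (x := (0 : C(X, ℝ)))
    have h00 : (fun g : C(X, ℝ) => φ g y) 0 = 0 := by simp
    apply this
    rw [h00]
    exact Ioo_mem_nhds (by norm_num) (by norm_num)
  have h0' : (fun g : C(X, ℝ) => φ g y) ⁻¹' Set.Ioo (-1) 1 ∈
      Filter.comap (fun f : C(X, ℝ) => (f : X → ℝ)) (nhds ((0 : C(X, ℝ)) : X → ℝ)) := by
    rw [← nhds_induced]; exact h0
  rw [Filter.mem_comap] at h0'
  obtain ⟨s, hs, hsub⟩ := h0'
  simp only [ContinuousMap.coe_zero] at hs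
  rw [nhds_pi, Filter.mem_pi] at hs
  obtain ⟨I, hIfin, t, ht, htsub⟩ := hs
  refine ⟨hIfin.toFinset, fun h hh => ?_⟩
  have key : ∀ c : ℝ, c * φ h y ∈ Set.Ioo (-1 : ℝ) 1 := by
    intro c
    have hmem : ((c • h : C(X, ℝ)) : X → ℝ) ∈ Set.pi I t := by
      intro x hx
      have hx0 : h x = 0 := hh x (hIfin.mem_toFinset.mpr hx)
      have : (c • h : C(X, ℝ)) x = 0 := by simp [hx0]
      rw [show ((c • h : C(X, ℝ)) : X → ℝ) x = (c • h : C(X, ℝ)) x from rfl, this]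
      exact mem_of_mem_nhds (ht x)
    have h1 : (c • h : C(X, ℝ)) ∈ (fun g : C(X, ℝ) => φ g y) ⁻¹' Set.Ioo (-1) 1 :=
      hsub (htsub hmem)
    have h2 : φ (c • h) y = c * φ h y := by
      rw [map_smul]; rfl
    rwa [Set.mem_preimage, h2] at h1
  by_contra hne
  have := key (2 / φ h y)
  rw [div_mul_cancel₀ _ hne] at this
  have := this.2
  norm_num at this

/-- Bump functions from complete regularity. -/
lemma cp_bump {X : Type} [TopologicalSpace X] [T35Space X] {O : Set X} (hO : IsOpen O)
    {x : X} (hx : x ∈ O) : ∃ h : C(X, ℝ), h x = 1 ∧ ∀ z, z ∉ O → h z = 0 := by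
  obtain ⟨f, cf, hfx, hfK⟩ := CompletelyRegularSpace.completely_regular x Oᶜ
    hO.isClosed_compl (by simpa)
  refine ⟨⟨fun z => 1 - (f z : ℝ), by continuity⟩, ?_, ?_⟩
  · simp [hfx]
  · intro z hz
    have h1 : f z = 1 := hfK hz
    simp [h1]

/-- For a continuous linear map `φ : C_p(X) → C_p(Y)`, the set-valued
map `y ↦ supp_φ(y)` is lower semi-continuous. -/
theorem suppMap_lowerSemicontinuous {X Y : Type}
    [TopologicalSpace X] [TopologicalSpace Y] [T35Space X] [T35Space Y]
    (φ : C(X, ℝ) →ₗ[ℝ] C(Y, ℝ)) (hφ : CpContinuous φ) :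
    ∀ U : Set X, IsOpen U → IsOpen {y : Y | (suppMap φ y ∩ U).Nonempty} := by
  classical
  intro U hU
  have key : {y : Y | (suppMap φ y ∩ U).Nonempty}
      = ⋃ f ∈ {f : C(X, ℝ) | ∀ z, z ∉ U → f z = 0}, {y : Y | φ f y ≠ 0} := by
    ext y
    simp only [Set.mem_setOf_eq, Set.mem_iUnion, exists_prop]
    constructor
    · rintro ⟨x, hx, hxU⟩
      exact hx U hU hxU
    · rintro ⟨f, hf, hfy⟩
      by_contra hcon
      -- every point of `U` fails to be in the support
      have hnot : ∀ x ∈ U, ∃ V : Set X, IsOpen V ∧ x ∈ V ∧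
          ∀ g : C(X, ℝ), (∀ z, z ∉ V → g z = 0) → φ g y = 0 := by
        intro x hxU
        by_contra hc
        push_neg at hc
        exact hcon ⟨x, fun V hV hxV => hc V hV hxV, hxU⟩
      choose! V hVopen hxV hVkill using hnot
      obtain ⟨F, hF⟩ := cp_finite_support φ hφ y
      set F' : Finset X := F.filter (· ∈ U) with hF'
      set O : X → Set X := fun x => (V x ∩ U) \ (↑(F.erase x) : Set X) with hO
      have hOopen : ∀ x ∈ U, IsOpen (O x) := fun x hx =>
        ((hVopen x hx).inter hU).sdiff (F.erase x).finite_toSet.isClosed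
      have hxO : ∀ x ∈ U, x ∈ O x := fun x hx =>
        ⟨⟨hxV x hx, hx⟩, by simp⟩
      have hbump : ∀ x ∈ F', ∃ h : C(X, ℝ), h x = 1 ∧ ∀ z, z ∉ O x → h z = 0 := by
        intro x hx
        have hxU := (Finset.mem_filter.mp hx).2
        exact cp_bump (hOopen x hxU) (hxO x hxU)
      choose! b hb1 hb0 using hbump
      set g : C(X, ℝ) := ∑ x ∈ F', (f x) • b x with hg
      -- φ g y = 0
      have hφg : φ g y = 0 := by
        rw [hg, map_sum]
        rw [show ((∑ x ∈ F', φ ((f x) • b x)) y) = ∑ x ∈ F', (φ ((f x) • b x)) y from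
          ContinuousMap.sum_apply _ _ _]
        refine Finset.sum_eq_zero fun x hx => ?_
        have hxU := (Finset.mem_filter.mp hx).2
        rw [map_smul]
        have hbx : φ (b x) y = 0 := by
          refine hVkill x hxU (b x) fun z hz => hb0 x hx z fun hzO => hz ?_
          exact hzO.1.1
        show f x * φ (b x) y = 0
        rw [hbx, mul_zero]
      -- f - g vanishes on F
      have hvanish : ∀ x' ∈ F, (f - g) x' = 0 := by
        intro x' hx'
        have hgval : g x' = if x' ∈ U then f x' else 0 := by
          rw [hg]
          rw [show ((∑ x ∈ F', (f x) • b x) x') = ∑ x ∈ F', ((f x) • b x) x' from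
            ContinuousMap.sum_apply _ _ _]
          by_cases hx'U : x' ∈ U
          · rw [if_pos hx'U]
            have hx'F' : x' ∈ F' := Finset.mem_filter.mpr ⟨hx', hx'U⟩
            rw [Finset.sum_eq_single x']
            · show f x' * b x' x' = f x'
              rw [hb1 x' hx'F', mul_one]
            · intro x hx hne
              show f x * b x x' = 0
              have : x' ∉ O x := fun hmem =>
                hmem.2 (by simp [Finset.mem_erase, hne.symm, hx'])
              rw [hb0 x hx x' this, mul_zero]
            · intro h; exact absurd hx'F' h
          · rw [if_neg hx'U]
            refine Finset.sum_eq_zero fun x hx => ?_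
            show f x * b x x' = 0
            have : x' ∉ O x := fun hmem => hx'U hmem.1.2
            rw [hb0 x hx x' this, mul_zero]
        show f x' - g x' = 0
        by_cases hx'U : x' ∈ U
        · rw [hgval, if_pos hx'U, sub_self]
        · rw [hgval, if_neg hx'U, hf x' hx'U, sub_zero]
      have hφfg : φ (f - g) y = 0 := hF (f - g) hvanish
      have : φ f y = 0 := by
        have heq : φ f = φ (f - g) + φ g := by rw [map_sub]; abel
        rw [heq]
        show φ (f - g) y + φ g y = 0
        rw [hφfg, hφg, add_zero]
      exact hfy this
  rw [key]
  refine isOpen_biUnion fun f _ => ?_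
  have : {y : Y | φ f y ≠ 0} = (φ f) ⁻¹' ({0}ᶜ) := rfl
  rw [this]
  exact isOpen_compl_singleton.preimage (map_continuous (φ f))
end

section
/- Let $\varphi : C_p(X) \to C_p(Y)$ be a continuous linear surjection. Then for every $y \in Y$, the support $\operatorname{supp}_\varphi(y)$ is nonempty. Moreover, if $f \in C_p(X)$ vanishes on $\operatorname{supp}_\varphi(y)$, then $\varphi(f)(y) = 0$. -/
open Filter Topology Set

/-- A CpTop-continuous linear functional depends only on finitely many points. -/
lemma exists_finite_dep {X : Type} [TopologicalSpace X] (L : C(X, ℝ) →ₗ[ℝ] ℝ)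
    (hL : @Continuous _ _ (CpTop X) _ L) :
    ∃ K : Set X, K.Finite ∧ ∀ f : C(X, ℝ), (∀ x ∈ K, f x = 0) → L f = 0 := by
  letI := CpTop X
  have h0 : Filter.Tendsto L (𝓝 (0 : C(X, ℝ))) (𝓝 (0 : ℝ)) := by
    simpa using hL.tendsto 0
  have hmem : L ⁻¹' Set.Ioo (-1 : ℝ) 1 ∈ 𝓝 (0 : C(X, ℝ)) :=
    h0 (Ioo_mem_nhds (by norm_num) (by norm_num))
  have hnhds : 𝓝 (0 : C(X, ℝ)) =
      Filter.comap (fun f : C(X, ℝ) => (f : X → ℝ)) (𝓝 ((0 : C(X, ℝ)) : X → ℝ)) :=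
    nhds_induced _ _
  rw [hnhds, Filter.mem_comap] at hmem
  obtain ⟨s, hs, hsub⟩ := hmem
  have : ((0 : C(X, ℝ)) : X → ℝ) = (0 : X → ℝ) := rfl
  rw [this, nhds_pi, Filter.mem_pi] at hs
  obtain ⟨I, hIfin, V, hV, hIV⟩ := hs
  refine ⟨I, hIfin, fun f hf => ?_⟩
  have key : ∀ c : ℝ, |c * L f| < 1 := by
    intro c
    have hc : ((c • f : C(X, ℝ)) : X → ℝ) ∈ s := by
      apply hIV
      intro x hx
      have : (c • f) x = 0 := by simp [hf x hx]
      rw [this]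
      exact mem_of_mem_nhds (hV x)
    have := hsub hc
    simp only [Set.mem_preimage, Set.mem_Ioo, map_smul, smul_eq_mul] at this
    rw [abs_lt]
    exact this
  by_contra hne
  have := key (2 / L f)
  rw [div_mul_cancel₀ 2 hne] at this
  norm_num at this

/-- Bump function from complete regularity. -/
lemma exists_bump {X : Type} [TopologicalSpace X] [T35Space X] {U : Set X}
    (hU : IsOpen U) {x : X} (hx : x ∈ U) :
    ∃ g : C(X, ℝ), g x = 1 ∧ ∀ z ∉ U, g z = 0 := by
  obtain ⟨f, hfc, hfx, hfK⟩ :=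
    CompletelyRegularSpace.completely_regular x Uᶜ hU.isClosed_compl (by simpa using hx)
  refine ⟨⟨fun z => 1 - (f z : ℝ), by fun_prop⟩, ?_, ?_⟩
  · simp [hfx]
  · intro z hz
    have : f z = 1 := hfK hz
    simp [this]


/-- If `φ : C_p(X) → C_p(Y)` is a continuous linear surjection, then
every support `supp_φ(y)` is nonempty, and any `f` vanishing on `supp_φ(y)` has
`φ f y = 0`. -/
theorem suppMap_nonempty_and_vanishing {X Y : Type}
    [TopologicalSpace X] [TopologicalSpace Y] [T35Space X] [T35Space Y]
    (φ : C(X, ℝ) →ₗ[ℝ] C(Y, ℝ)) (hφ : CpContinuous φ)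
    (hsurj : Function.Surjective φ) :
    ∀ y : Y, (suppMap φ y).Nonempty ∧
      ∀ f : C(X, ℝ), (∀ x ∈ suppMap φ y, f x = 0) → φ f y = 0 := by
  classical
  intro y
  -- the evaluation functional
  set L : C(X, ℝ) →ₗ[ℝ] ℝ :=
    { toFun := fun f => φ f y
      map_add' := by intros; simp
      map_smul' := by intros; simp } with hLdef
  have hLc : @Continuous _ _ (CpTop X) _ L := by
    letI := CpTop X
    letI := CpTop Y
    have hcoe : Continuous (fun g : C(Y, ℝ) => (g : Y → ℝ)) := continuous_induced_dom
    exact ((continuous_apply y).comp hcoe).comp hφ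
  obtain ⟨K, hKfin, hK⟩ := exists_finite_dep L hLc
  -- main vanishing claim
  have main : ∀ f : C(X, ℝ), (∀ x ∈ suppMap φ y, f x = 0) → L f = 0 := by
    intro f hf
    -- choose bumps at points not in the support
    have H : ∀ x : X, ∃ g : C(X, ℝ), x ∉ suppMap φ y →
        g x = 1 ∧ L g = 0 ∧ ∀ z ∈ K, z ≠ x → g z = 0 := by
      intro x
      by_cases hx : x ∉ suppMap φ y
      · simp only [suppMap, Set.mem_setOf_eq, not_forall] at hx
        obtain ⟨U, hUo, hxU, hUvan⟩ := hx
        push_neg at hUvan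
        set U' : Set X := U \ (K \ {x}) with hU'def
        have hU'o : IsOpen U' := hUo.sdiff ((hKfin.diff : (K \ {x}).Finite).isClosed)
        have hxU' : x ∈ U' := ⟨hxU, fun h => h.2 rfl⟩
        obtain ⟨g, hgx, hgvan⟩ := exists_bump hU'o hxU'
        refine ⟨g, fun _ => ⟨hgx, ?_, ?_⟩⟩
        · exact hUvan g (fun z hz => hgvan z (fun h => hz h.1))
        · intro z hzK hzx
          exact hgvan z (fun h => h.2 ⟨hzK, hzx⟩)
      · exact ⟨0, fun h => absurd h hx⟩
    choose g hg using H
    -- the finite set of "bad" points of K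
    set T : Finset X := hKfin.toFinset.filter (fun x => x ∉ suppMap φ y) with hTdef
    have hT : ∀ x ∈ T, x ∉ suppMap φ y := by
      intro x hx
      exact (Finset.mem_filter.mp hx).2
    set h : C(X, ℝ) := f - ∑ x ∈ T, f x • g x with hhdef
    have hhK : ∀ z ∈ K, h z = 0 := by
      intro z hz
      have hsum : (∑ x ∈ T, f x • g x) z = ∑ x ∈ T, f x * g x z := by
        rw [ContinuousMap.sum_apply]
        simp
      have happ : h z = f z - ∑ x ∈ T, f x * g x z := by
        simp [hhdef, hsum]
      by_cases hzs : z ∈ suppMap φ y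
      · have h1 : ∀ x ∈ T, f x * g x z = 0 := by
          intro x hx
          have hxs := hT x hx
          have hzx : z ≠ x := fun h => hxs (h ▸ hzs)
          rw [(hg x hxs).2.2 z hz hzx, mul_zero]
        rw [happ, Finset.sum_eq_zero h1, hf z hzs, sub_zero]
      · have hzT : z ∈ T := Finset.mem_filter.mpr ⟨hKfin.mem_toFinset.mpr hz, hzs⟩
        rw [happ, Finset.sum_eq_single z
          (fun x hx hxz => by
            rw [(hg x (hT x hx)).2.2 z hz (Ne.symm hxz), mul_zero])
          (fun hzn => absurd hzT hzn)]
        rw [(hg z hzs).1, mul_one, sub_self]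
    have hLh : L h = 0 := hK h hhK
    have hLg : ∀ x ∈ T, L (g x) = 0 := fun x hx => (hg x (hT x hx)).2.1
    have : L f = L h + ∑ x ∈ T, f x * L (g x) := by
      simp only [hhdef, map_sub, map_sum, map_smul, smul_eq_mul]
      ring
    rw [this, hLh, Finset.sum_congr rfl (fun x hx => by rw [hLg x hx, mul_zero]),
      Finset.sum_const_zero, add_zero]
  -- nonemptiness
  have hsupp : (suppMap φ y).Nonempty := by
    by_contra hempty
    rw [Set.not_nonempty_iff_eq_empty] at hempty
    obtain ⟨f1, hf1⟩ := hsurj 1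
    have : L f1 = 0 := main f1 (by simp [hempty])
    have h1 : L f1 = 1 := by
      simp [hLdef, hf1]
    rw [this] at h1
    norm_num at h1
  exact ⟨hsupp, main⟩
end

section
/- Let $\varphi : C_p(X) \to C_p(Y)$ be a continuous linear map and $y \in Y$. Then $s_\varphi(y) = \operatorname{supp}_\varphi(y)$, i.e., the set of points of $\beta X$ all of whose neighborhoods are $y$-ineffective coincides with the support of $y$ with respect to $\varphi$ (in particular $s_\varphi(y) \subseteq X$). -/
/-- The continuous extension of `g ∈ C(Z, ℝ)` to a map `βZ → ℝ ∪ {∞}` into the one-point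
compactification of `ℝ`. -/
noncomputable def extOP {Z : Type} [TopologicalSpace Z] (g : C(Z, ℝ)) :
    StoneCech Z → OnePoint ℝ :=
  stoneCechExtend (g := fun z => ((g z : ℝ) : OnePoint ℝ))
    (OnePoint.continuous_coe.comp g.continuous)

/-- An open `U ⊆ βX` is `y`-effective (for `y ∈ βY`) if every `f ∈ C(X, ℝ)` vanishing on
`X \ U` satisfies `(φ f)~(y) = 0`. -/
def YEffective {X Y : Type} [TopologicalSpace X] [TopologicalSpace Y]
    (φ : C(X, ℝ) →ₗ[ℝ] C(Y, ℝ)) (y : StoneCech Y) (U : Set (StoneCech X)) : Prop :=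
  ∀ f : C(X, ℝ), (∀ x : X, stoneCechUnit x ∉ U → f x = 0) →
    extOP (φ f) y = ((0 : ℝ) : OnePoint ℝ)

/-- `s_φ(y) ⊆ βX`: the set of points of `βX` all of whose open neighbourhoods are
`y`-ineffective. -/
def sphi {X Y : Type} [TopologicalSpace X] [TopologicalSpace Y]
    (φ : C(X, ℝ) →ₗ[ℝ] C(Y, ℝ)) (y : StoneCech Y) : Set (StoneCech X) :=
  {x | ∀ U : Set (StoneCech X), IsOpen U → x ∈ U → ¬ YEffective φ y U}

/-- Lemma A: there is a finite set `I` such that functions vanishing on `I`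
are killed by `f ↦ φ f y`. -/
lemma lemA {X Y : Type} [TopologicalSpace X] [TopologicalSpace Y]
    (φ : C(X, ℝ) →ₗ[ℝ] C(Y, ℝ)) (hφ : CpContinuous φ) (y : Y) :
    ∃ I : Finset X, ∀ f : C(X, ℝ), (∀ x ∈ I, f x = 0) → φ f y = 0 := by
  have hev : @Continuous _ _ (CpTop Y) _ (fun g : C(Y, ℝ) => g y) := by
    have h1 : @Continuous _ _ (CpTop Y) _ (fun g : C(Y, ℝ) => (g : Y → ℝ)) :=
      @continuous_induced_dom _ _ _ _
    exact @Continuous.comp _ _ _ (CpTop Y) _ _ _ _ (continuous_apply y) h1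
  have hF : @Continuous _ _ (CpTop X) _ (fun f : C(X, ℝ) => φ f y) :=
    @Continuous.comp _ _ _ (CpTop X) (CpTop Y) _ _ _ hev hφ
  have hFabs : @Continuous _ _ (CpTop X) _ (fun f : C(X, ℝ) => |φ f y|) :=
    @Continuous.comp _ _ _ (CpTop X) _ _ _ _ continuous_abs hF
  have hV : {f : C(X, ℝ) | |φ f y| < 1} ∈ @nhds _ (CpTop X) 0 := by
    have h0 : Set.Iio (1 : ℝ) ∈ nhds (|φ (0 : C(X, ℝ)) y|) := by
      simp only [map_zero, ContinuousMap.zero_apply, abs_zero]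
      exact Iio_mem_nhds one_pos
    have := (@Continuous.tendsto _ _ (CpTop X) _ _ hFabs 0) h0
    exact this
  rw [show @nhds _ (CpTop X) 0 = Filter.comap (fun f : C(X, ℝ) => (f : X → ℝ))
      (nhds ((0 : C(X, ℝ)) : X → ℝ)) from nhds_induced _ _] at hV
  obtain ⟨W, hW, hWV⟩ := Filter.mem_comap.mp hV
  rw [show ((0 : C(X, ℝ)) : X → ℝ) = (0 : X → ℝ) from rfl, nhds_pi] at hW
  obtain ⟨I, hIfin, t, ht, htW⟩ := Filter.mem_pi.mp hW
  refine ⟨hIfin.toFinset, fun f hf => ?_⟩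
  by_contra hne
  have key : ∀ c : ℝ, |c * φ f y| < 1 := by
    intro c
    have hmem : ((c • f : C(X, ℝ)) : X → ℝ) ∈ Set.pi I t := by
      intro x hx
      have : f x = 0 := hf x (hIfin.mem_toFinset.mpr hx)
      simp [this]
      exact mem_of_mem_nhds (ht x)
    have := hWV (htW hmem)
    simpa [map_smul, abs_mul] using this
  have := key (2 / φ f y)
  rw [div_mul_cancel₀ _ hne] at this
  norm_num at this

/-- Lemma C: functions vanishing on `suppMap φ y` are killed by `f ↦ φ f y`. -/
lemma lemC {X Y : Type} [TopologicalSpace X] [TopologicalSpace Y] [T35Space X]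
    (φ : C(X, ℝ) →ₗ[ℝ] C(Y, ℝ)) (hφ : CpContinuous φ) (y : Y) :
    ∀ f : C(X, ℝ), (∀ x ∈ suppMap φ y, f x = 0) → φ f y = 0 := by
  classical
  obtain ⟨I, hI⟩ := lemA φ hφ y
  suffices H : ∀ (n : ℕ) (J : Finset X), J.card ≤ n →
      (∀ f : C(X, ℝ), (∀ x ∈ J, f x = 0) → φ f y = 0) →
      ∀ f : C(X, ℝ), (∀ x ∈ suppMap φ y, f x = 0) → φ f y = 0 by
    exact H I.card I le_rfl hI
  intro n
  induction n with
  | zero =>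
    intro J hJ hA f hf
    exact hA f (fun x hx => by simp [Finset.card_eq_zero.mp (Nat.le_zero.mp hJ)] at hx)
  | succ n ih =>
    intro J hJ hA f hf
    by_cases hsub : (J : Set X) ⊆ suppMap φ y
    · exact hA f (fun x hx => hf x (hsub hx))
    · obtain ⟨x, hxJ, hxs⟩ : ∃ x ∈ J, x ∉ suppMap φ y := by
        by_contra h; push_neg at h; exact hsub h
      simp only [suppMap, Set.mem_setOf_eq] at hxs
      push_neg at hxs
      obtain ⟨U, hUopen, hxU, hUeff⟩ := hxs
      -- shrink U to avoid J.erase x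
      set U' : Set X := U ∩ ((J.erase x : Set X))ᶜ with hU'def
      have hU'open : IsOpen U' :=
        hUopen.inter (J.erase x).finite_toSet.isClosed.isOpen_compl
      have hxU' : x ∈ U' := ⟨hxU, by simp⟩
      obtain ⟨u, hu, hux, huK⟩ := CompletelyRegularSpace.completely_regular x U'ᶜ
        hU'open.isClosed_compl (by simp [hxU'])
      set h : C(X, ℝ) := ⟨fun z => 1 - (u z : ℝ),
        (continuous_const.sub (continuous_subtype_val.comp hu))⟩ with hhdef
      have hhx : h x = 1 := by simp [hhdef, hux]
      have hhz : ∀ z, z ∉ U' → h z = 0 := by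
        intro z hz
        have : u z = 1 := huK hz
        simp [hhdef, this]
      -- the new killing property on J.erase x
      have hA' : ∀ g : C(X, ℝ), (∀ z ∈ J.erase x, g z = 0) → φ g y = 0 := by
        intro g hg
        have h1 : φ (h * g) y = 0 := by
          apply hUeff
          intro z hz
          have : h z = 0 := hhz z (fun hzU' => hz hzU'.1)
          simp [this]
        have h2 : φ (g - h * g) y = 0 := by
          apply hA
          intro z hz
          by_cases hzx : z = x
          · subst hzx; simp [hhx]
          · have : g z = 0 := hg z (Finset.mem_erase.mpr ⟨hzx, hz⟩)
            simp [this]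
        have hgdecomp : g = h * g + (g - h * g) := by ring
        rw [hgdecomp, map_add, ContinuousMap.add_apply, h1, h2, add_zero]
      apply ih (J.erase x) _ hA' f hf
      have := Finset.card_erase_lt_of_mem hxJ
      omega

/-- `extOP` extends the original function along `stoneCechUnit`. -/
lemma extOP_unit {Z : Type} [TopologicalSpace Z] (g : C(Z, ℝ)) (z : Z) :
    extOP g (stoneCechUnit z) = ((g z : ℝ) : OnePoint ℝ) :=
  congrFun (stoneCechExtend_extends _) z

/-- For a continuous linear `φ : C_p(X) → C_p(Y)` and `y ∈ Y`,
`s_φ(y)` coincides with (the copy in `βX` of) `supp_φ(y)`; in particular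
`s_φ(y) ⊆ X`. -/
theorem sphi_eq_suppMap {X Y : Type}
    [TopologicalSpace X] [TopologicalSpace Y] [T35Space X] [T35Space Y]
    (φ : C(X, ℝ) →ₗ[ℝ] C(Y, ℝ)) (hφ : CpContinuous φ) (y : Y) :
    sphi φ (stoneCechUnit y) = stoneCechUnit '' suppMap φ y := by
  classical
  ext p
  constructor
  · intro hp
    by_contra hpx
    obtain ⟨I, hI⟩ := lemA φ hφ y
    have hsupp_sub : suppMap φ y ⊆ ↑I := by
      intro x hx
      by_contra hxI
      obtain ⟨f, hf, hfy⟩ := hx (↑I)ᶜ I.finite_toSet.isClosed.isOpen_compl (by simpa)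
      exact hfy (hI f (fun z hz => hf z (by simp [hz])))
    have hFfin : (stoneCechUnit '' suppMap φ y).Finite :=
      (I.finite_toSet.subset hsupp_sub).image _
    have hU : IsOpen (stoneCechUnit '' suppMap φ y)ᶜ := hFfin.isClosed.isOpen_compl
    refine hp _ hU hpx ?_
    intro f hf
    have h0 : φ f y = 0 := lemC φ hφ y f (fun x hx =>
      hf x (Set.notMem_compl_iff.mpr (Set.mem_image_of_mem _ hx)))
    rw [extOP_unit, h0]
  · rintro ⟨x, hx, rfl⟩ U hUopen hxU hEff
    obtain ⟨f, hf, hfy⟩ := hx (stoneCechUnit ⁻¹' U)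
      (hUopen.preimage continuous_stoneCechUnit) hxU
    have := hEff f (fun z hz => hf z hz)
    rw [extOP_unit] at this
    exact hfy (OnePoint.coe_eq_coe.mp this)
end

section
/- Let $\varphi : C_p(X) \to C_p(Y)$ be a continuous linear surjection. Then for every $y \in \beta Y$, the set $s_\varphi(y)$ is nonempty. -/
/-- If `φ : C_p(X) → C_p(Y)` is a continuous linear surjection, then
`s_φ(y)` is nonempty for every `y ∈ βY`. -/
theorem sphi_nonempty {X Y : Type}
    [TopologicalSpace X] [TopologicalSpace Y] [T35Space X] [T35Space Y]
    (φ : C(X, ℝ) →ₗ[ℝ] C(Y, ℝ)) (hφ : CpContinuous φ)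
    (hsurj : Function.Surjective φ) :
    ∀ y : StoneCech Y, (sphi φ y).Nonempty := by
  intro y
  by_contra hempty
  rw [Set.not_nonempty_iff_eq_empty] at hempty
  -- the filter on Y obtained by pulling back the neighbourhood filter of y
  set l : Filter Y := Filter.comap stoneCechUnit (nhds y) with hl
  have hlne : l.NeBot := by
    rw [hl, Filter.comap_neBot_iff]
    intro s hs
    rcases (denseRange_stoneCechUnit (α := Y)).mem_nhds hs with ⟨z, hz⟩
    exact ⟨z, hz⟩
  -- translation between `extOP` values and filter limits
  have key : ∀ (g : C(Y, ℝ)) (c : ℝ), extOP g y = (c : OnePoint ℝ) →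
      Filter.Tendsto (fun z => g z) l (nhds c) := by
    intro g c hg
    have h1 : Filter.Tendsto (fun z => extOP g (stoneCechUnit z)) l (nhds (extOP g y)) :=
      ((continuous_stoneCechExtend _).tendsto y).comp Filter.tendsto_comap
    have h2 : (fun z => extOP g (stoneCechUnit z)) =
        fun z => ((g z : ℝ) : OnePoint ℝ) := by
      funext z
      exact congrFun (stoneCechExtend_extends _) z
    rw [h2, hg] at h1
    exact (OnePoint.isOpenEmbedding_coe.isInducing.tendsto_nhds_iff).2 h1
  have key' : ∀ (g : C(Y, ℝ)) (c : ℝ), Filter.Tendsto (fun z => g z) l (nhds c) →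
      extOP g y = (c : OnePoint ℝ) := by
    intro g c hg
    have h1 : Filter.Tendsto (fun z => extOP g (stoneCechUnit z)) l (nhds (extOP g y)) :=
      ((continuous_stoneCechExtend _).tendsto y).comp Filter.tendsto_comap
    have h2 : (fun z => extOP g (stoneCechUnit z)) =
        fun z => ((g z : ℝ) : OnePoint ℝ) := by
      funext z
      exact congrFun (stoneCechExtend_extends _) z
    rw [h2] at h1
    have h3 : Filter.Tendsto (fun z => ((g z : ℝ) : OnePoint ℝ)) l (nhds (c : OnePoint ℝ)) :=
      (OnePoint.continuous_coe.tendsto c).comp hg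
    exact tendsto_nhds_unique h1 h3
  -- every point of βX has a y-effective open neighbourhood
  have hcov : ∀ x : StoneCech X, ∃ U : Set (StoneCech X),
      IsOpen U ∧ x ∈ U ∧ YEffective φ y U := by
    intro x
    by_contra h
    push_neg at h
    have hx : x ∈ sphi φ y := by
      intro U hU hxU heff
      exact (h U hU hxU) heff
    rw [hempty] at hx
    exact hx
  choose U hUo hUx hUeff using hcov
  -- finite subcover of the compact space βX
  obtain ⟨t, ht⟩ := IsCompact.elim_finite_subcover (isCompact_univ (X := StoneCech X)) U hUo
    (fun x _ => Set.mem_iUnion.2 ⟨x, hUx x⟩)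
  -- partition of unity subordinate to the finite cover
  obtain ⟨ρ, hρ⟩ := PartitionOfUnity.exists_isSubordinate (ι := ↥t) (s := Set.univ)
    isClosed_univ (fun i => U (i : StoneCech X)) (fun i => hUo i)
    (by
      intro z _
      rcases Set.mem_iUnion₂.1 (ht (Set.mem_univ z)) with ⟨x, hxt, hxz⟩
      exact Set.mem_iUnion.2 ⟨⟨x, hxt⟩, hxz⟩)
  -- claim: extOP (φ f) y = 0 for every f
  have main : ∀ f : C(X, ℝ), extOP (φ f) y = ((0 : ℝ) : OnePoint ℝ) := by
    intro f
    -- decompose f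
    set F : ↥t → C(X, ℝ) := fun i =>
      ((ρ i).comp ⟨stoneCechUnit, continuous_stoneCechUnit⟩) * f with hF
    have hdecomp : f = ∑ i : ↥t, F i := by
      ext x
      rw [ContinuousMap.sum_apply]
      have hsum : ∑ᶠ i : ↥t, ρ i (stoneCechUnit x) = 1 := ρ.sum_eq_one (Set.mem_univ _)
      rw [finsum_eq_sum_of_fintype] at hsum
      simp only [hF, ContinuousMap.mul_apply, ContinuousMap.comp_apply,
        ContinuousMap.coe_mk]
      rw [← Finset.sum_mul, hsum, one_mul]
    -- each piece vanishes off U i, so extOP (φ (F i)) y = 0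
    have hFi : ∀ i : ↥t, extOP (φ (F i)) y = ((0 : ℝ) : OnePoint ℝ) := by
      intro i
      apply hUeff (i : StoneCech X)
      intro x hx
      have hz : ρ i (stoneCechUnit x) = 0 := by
        have : stoneCechUnit x ∉ tsupport (ρ i) := fun h => hx (hρ i h)
        exact image_eq_zero_of_notMem_tsupport this
      simp [hF, hz]
    -- each piece tends to 0 along l
    have hti : ∀ i : ↥t, Filter.Tendsto (fun z => (φ (F i)) z) l (nhds (0 : ℝ)) :=
      fun i => key _ 0 (hFi i)
    -- hence φ f tends to 0 along l
    have htf : Filter.Tendsto (fun z => (φ f) z) l (nhds (0 : ℝ)) := by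
      have hφf : ∀ z, (φ f) z = ∑ i : ↥t, (φ (F i)) z := by
        intro z
        rw [hdecomp, map_sum]
        rw [ContinuousMap.sum_apply]
      simp only [hφf]
      have := tendsto_finset_sum Finset.univ (fun i _ => hti i)
      simpa using this
    exact key' _ 0 htf
  -- but φ is surjective, so the constant function 1 is in the range
  obtain ⟨f, hf⟩ := hsurj 1
  have h0 := main f
  rw [hf] at h0
  have h1 : extOP (1 : C(Y, ℝ)) y = ((1 : ℝ) : OnePoint ℝ) := by
    apply key'
    have : (fun z => (1 : C(Y, ℝ)) z) = fun _ => (1 : ℝ) := rfl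
    rw [this]
    exact tendsto_const_nhds
  rw [h1] at h0
  exact one_ne_zero (OnePoint.coe_injective h0)
end

section
/- Let $\varphi : C_p(X) \to C_p(Y)$ be a continuous linear surjection. Then the set-valued map $s_\varphi : \beta Y \to \mathcal{K}(\beta X)$, $y \mapsto s_\varphi(y)$, is lower semi-continuous: for every open $U \subseteq \beta X$, the set $\{y \in \beta Y : s_\varphi(y) \cap U \neq \emptyset\}$ is open in $\beta Y$. -/
open Filter Topology

section Aux

variable {Z : Type} [TopologicalSpace Z]

/-- The canonical filter on `Z` converging to `y ∈ βZ`. -/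
noncomputable def bF (y : StoneCech Z) : Filter Z :=
  Filter.comap stoneCechUnit (𝓝 y)

instance bF_neBot (y : StoneCech Z) : (bF y).NeBot := by
  rw [bF, Filter.comap_neBot_iff]
  intro t ht
  have hy : y ∈ closure (Set.range (stoneCechUnit : Z → StoneCech Z)) := by
    rw [denseRange_stoneCechUnit.closure_eq]; trivial
  obtain ⟨p, hpt, z, hz⟩ := mem_closure_iff_nhds.mp hy t ht
  exact ⟨z, hz ▸ hpt⟩

lemma extOP_tendsto (g : C(Z, ℝ)) (y : StoneCech Z) :
    Filter.Tendsto (fun z => ((g z : ℝ) : OnePoint ℝ)) (bF y) (𝓝 (extOP g y)) := by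
  have h1 : Filter.Tendsto (stoneCechUnit : Z → StoneCech Z) (bF y) (𝓝 y) :=
    Filter.tendsto_comap
  have h2 : Filter.Tendsto ((extOP g) ∘ (stoneCechUnit : Z → StoneCech Z)) (bF y)
      (𝓝 (extOP g y)) :=
    ((continuous_stoneCechExtend
      (OnePoint.continuous_coe.comp g.continuous)).tendsto y).comp h1
  have h3 : (extOP g) ∘ (stoneCechUnit : Z → StoneCech Z)
      = fun z => ((g z : ℝ) : OnePoint ℝ) :=
    stoneCechExtend_extends _
  rwa [h3] at h2

lemma extOP_eq_coe_iff (g : C(Z, ℝ)) (y : StoneCech Z) (r : ℝ) :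
    extOP g y = (r : OnePoint ℝ) ↔
      Filter.Tendsto (fun z => g z) (bF y) (𝓝 r) := by
  constructor
  · intro h
    have := extOP_tendsto g y
    rw [h] at this
    exact (OnePoint.isOpenEmbedding_coe.tendsto_nhds_iff).2 this
  · intro h
    have h' : Filter.Tendsto (fun z => ((g z : ℝ) : OnePoint ℝ)) (bF y)
        (𝓝 ((r : ℝ) : OnePoint ℝ)) :=
      (OnePoint.continuous_coe.tendsto r).comp h
    exact tendsto_nhds_unique (extOP_tendsto g y) h'

end Aux

/-- The effectiveness lemma: if `sphi φ y ⊆ W` with `W` open and `f` vanishes on `W ∩ X`,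
then the extension of `φ f` vanishes at `y`. -/
lemma effectiveness {X Y : Type} [TopologicalSpace X] [TopologicalSpace Y]
    (φ : C(X, ℝ) →ₗ[ℝ] C(Y, ℝ)) (y : StoneCech Y) (W : Set (StoneCech X))
    (hW : IsOpen W) (hsub : sphi φ y ⊆ W) (f : C(X, ℝ))
    (hf : ∀ x : X, stoneCechUnit x ∈ W → f x = 0) :
    extOP (φ f) y = ((0 : ℝ) : OnePoint ℝ) := by
  -- every point outside W has an effective open neighbourhood
  have hK : IsCompact (Wᶜ : Set (StoneCech X)) := hW.isClosed_compl.isCompact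
  have hx : ∀ x ∈ (Wᶜ : Set (StoneCech X)), ∃ V : Set (StoneCech X),
      IsOpen V ∧ x ∈ V ∧ YEffective φ y V := by
    intro x hxW
    have : x ∉ sphi φ y := fun h => hxW (hsub h)
    rw [sphi, Set.mem_setOf_eq] at this
    push_neg at this
    obtain ⟨V, hVopen, hxV, hVeff⟩ := this
    exact ⟨V, hVopen, hxV, hVeff⟩
  choose V hVopen hVmem hVeff using hx
  -- finite subcover
  obtain ⟨t, hcov⟩ := hK.elim_nhds_subcover' (fun x hx => V x hx)
    (fun x hx => (hVopen x hx).mem_nhds (hVmem x hx))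
  -- the open cover of βX indexed by Option t
  set G : Option t → Set (StoneCech X) := fun i =>
    Option.rec W (fun x => V x.1.1 x.1.2) i with hG
  have hGopen : ∀ i, IsOpen (G i) := by
    rintro (_ | x)
    · exact hW
    · exact hVopen _ _
  have hGcov : (Set.univ : Set (StoneCech X)) ⊆ ⋃ i, G i := by
    intro x _
    by_cases hxW : x ∈ W
    · exact Set.mem_iUnion.2 ⟨none, hxW⟩
    · have := hcov hxW
      rw [Set.mem_iUnion₂] at this
      obtain ⟨z, hz, hmem⟩ := this
      exact Set.mem_iUnion.2 ⟨some ⟨z, hz⟩, hmem⟩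
  -- partition of unity
  obtain ⟨ρ, hρ⟩ := PartitionOfUnity.exists_isSubordinate isClosed_univ G hGopen hGcov
  -- the pieces
  set g : Option t → C(X, ℝ) := fun i =>
    ⟨fun x => ρ i (stoneCechUnit x) * f x,
      ((ρ i).continuous.comp continuous_stoneCechUnit).mul f.continuous⟩ with hg
  have hsum : f = ∑ i : Option t, g i := by
    ext x
    have h1 : ∑ᶠ i, ρ i (stoneCechUnit x) = 1 := ρ.sum_eq_one (Set.mem_univ _)
    rw [finsum_eq_sum_of_fintype] at h1
    have : (∑ i : Option t, g i) x = ∑ i : Option t, ρ i (stoneCechUnit x) * f x := by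
      rw [ContinuousMap.coe_sum, Finset.sum_apply]
      exact Finset.sum_congr rfl (fun i _ => rfl)
    rw [this, ← Finset.sum_mul, h1, one_mul]
  -- the `none` piece vanishes identically
  have hnone : g none = 0 := by
    ext x
    by_cases hxW : stoneCechUnit x ∈ W
    · simp [hg, hf x hxW]
    · have : ρ none (stoneCechUnit x) = 0 := by
        by_contra h
        exact hxW (hρ none (subset_tsupport _ (Function.mem_support.2 h)))
      simp [hg, this]
  -- the other pieces are killed by effectiveness
  have hkill : ∀ i : Option t, Filter.Tendsto (fun z => φ (g i) z) (bF y) (𝓝 0) := by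
    intro i
    match i with
    | none =>
        rw [hnone, map_zero]
        simpa using tendsto_const_nhds (α := Y) (f := bF y) (a := (0 : ℝ))
    | some x =>
        have heff := hVeff x.1.1 x.1.2 (g (some x)) ?_
        · exact (extOP_eq_coe_iff _ _ _).1 heff
        · intro z hz
          have : ρ (some x) (stoneCechUnit z) = 0 := by
            by_contra h
            exact hz (hρ (some x) (subset_tsupport _ (Function.mem_support.2 h)))
          simp [hg, this]
  -- sum up
  rw [extOP_eq_coe_iff]
  have : Filter.Tendsto (fun z => ∑ i : Option t, φ (g i) z) (bF y) (𝓝 0) := by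
    have := tendsto_finset_sum (Finset.univ : Finset (Option t))
      (fun i _ => hkill i)
    simpa using this
  convert this using 1
  ext z
  rw [hsum, map_sum, ContinuousMap.coe_sum, Finset.sum_apply]

/-- If `φ : C_p(X) → C_p(Y)` is a continuous linear surjection, then
the set-valued map `y ↦ s_φ(y)` from `βY` to the compact subsets of `βX` is lower
semi-continuous. -/
theorem sphi_lowerSemicontinuous {X Y : Type}
    [TopologicalSpace X] [TopologicalSpace Y] [T35Space X] [T35Space Y]
    (φ : C(X, ℝ) →ₗ[ℝ] C(Y, ℝ)) (hφ : CpContinuous φ)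
    (hsurj : Function.Surjective φ) :
    ∀ U : Set (StoneCech X), IsOpen U →
      IsOpen {y : StoneCech Y | (sphi φ y ∩ U).Nonempty} := by
  intro U hU
  rw [isOpen_iff_forall_mem_open]
  rintro y₀ ⟨x₀, hx₀s, hx₀U⟩
  -- choose a closed neighbourhood V' of x₀ inside U
  obtain ⟨V', hV'nhds, hV'closed, hV'sub⟩ :=
    exists_mem_nhds_isClosed_subset (hU.mem_nhds hx₀U)
  -- x₀ ∈ sphi φ y₀, so interior V' is not y₀-effective
  have hx₀int : x₀ ∈ interior V' := mem_interior_iff_mem_nhds.2 hV'nhds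
  have hineff := hx₀s (interior V') isOpen_interior hx₀int
  rw [YEffective] at hineff
  push_neg at hineff
  obtain ⟨f, hfvan, hfne⟩ := hineff
  -- the open neighbourhood of y₀
  refine ⟨(extOP (φ f)) ⁻¹' ({((0 : ℝ) : OnePoint ℝ)}ᶜ), ?_, ?_, hfne⟩
  · -- contained in the set
    intro y hy
    by_contra hne
    have hempty : sphi φ y ∩ U = ∅ := Set.not_nonempty_iff_eq_empty.1 hne
    have hsub : sphi φ y ⊆ (V' : Set (StoneCech X))ᶜ := by
      intro x hx
      intro hxV'
      have : x ∈ sphi φ y ∩ U := ⟨hx, hV'sub hxV'⟩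
      rw [hempty] at this
      exact this
    have := effectiveness φ y (V'ᶜ) hV'closed.isOpen_compl hsub f ?_
    · exact hy this
    · intro x hxc
      exact hfvan x (fun hmem => hxc (interior_subset hmem))
  · -- open
    exact (continuous_stoneCechExtend _).isOpen_preimage _ (isOpen_compl_singleton)
end

section
/- Let $Z$ be a compact Hausdorff space, $X \subseteq Z$ with $X \subseteq \bigcup_{i=1}^\infty F_i$ for compact sets $F_i \subseteq Z$. If $\sigma$ is a winning strategy of player I in the $k$-Porada game $kP(Z, Z \setminus X)$, then for every $k \in \mathbb{N}$ and every admissible tuple $(V_0, \ldots, V_k)$ of moves of player II, there exist $m > k$ and open sets $V_{k+1}, \ldots, V_m$ such that $(V_0, \ldots, V_m)$ is admissible and the compact set $K_{m+1}$ in $\sigma(V_0, \ldots, V_m) = (K_{m+1}, U_{m+1})$ satisfies $K_{m+1} \cap \bigcup_{i=1}^\infty F_i \neq \emptyset$. -/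
/-- A strategy of player I in the `k`-Porada game on `Z`: in round `n`, given the
sequence of player II's previous moves, it returns a pair `(K, U)` of a compact set
and an open set. The `move` function may only depend on the first `n` moves of II. -/
structure IStrategy (Z : Type*) [TopologicalSpace Z] where
  move : ℕ → (ℕ → Set Z) → Set Z × Set Z
  prefix_dep : ∀ n (V W : ℕ → Set Z), (∀ i < n, V i = W i) → move n V = move n W

variable {Z : Type*} [TopologicalSpace Z]

/-- Player II's move in round `i` is legal against strategy `σ`. -/
def LegalAt (σ : IStrategy Z) (V : ℕ → Set Z) (i : ℕ) : Prop :=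
  IsOpen (V i) ∧ (σ.move i V).1 ⊆ V i ∧ V i ⊆ (σ.move i V).2

/-- `σ` is a valid strategy of player I in the `k`-Porada game `kP(Z, A)`: against any
legal partial play of II, the prescribed pair `(Kₙ, Uₙ)` satisfies: `Kₙ` is nonempty
compact, `Uₙ` is open, `Kₙ ⊆ Uₙ`, `K₀ ⊆ A`, and for `n ≥ 1`, `Uₙ ⊆ V_{n-1}`
(hence `Kₙ ⊆ Uₙ ⊆ V_{n-1}`). -/
def ValidStrategy (A : Set Z) (σ : IStrategy Z) : Prop :=
  ∀ n (V : ℕ → Set Z), (∀ i < n, LegalAt σ V i) →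
    (σ.move n V).1.Nonempty ∧ IsCompact (σ.move n V).1 ∧ IsOpen (σ.move n V).2 ∧
    (σ.move n V).1 ⊆ (σ.move n V).2 ∧
    (n = 0 → (σ.move n V).1 ⊆ A) ∧
    (∀ m, n = m + 1 → (σ.move n V).2 ⊆ V m)

/-- `σ` is a winning strategy of player I in `kP(Z, A)`: it is valid, and in every run
in which II plays legally throughout, II does not win, i.e. it is not the case that
`∅ ≠ ⋂ₙ Uₙ ⊆ A`. -/
def WinningStrategyI (A : Set Z) (σ : IStrategy Z) : Prop :=
  ValidStrategy A σ ∧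
    ∀ V : ℕ → Set Z, (∀ i, LegalAt σ V i) →
      ¬((⋂ n, (σ.move n V).2).Nonempty ∧ (⋂ n, (σ.move n V).2) ⊆ A)

/-- Let `Z` be compact Hausdorff, `X ⊆ Z` covered by countably many
compact sets `Fᵢ ⊆ Z`, and let `σ` be a winning strategy of player I in `kP(Z, Z \ X)`.
Then for every `k` and every legal partial play `V₀, …, V_k` of II, there are `m > k`
and an extension `W` of the partial play, legal up to round `m`, such that the compact
set `K_{m+1}` prescribed by `σ` after `(W₀, …, W_m)` meets `⋃ᵢ Fᵢ`. -/
theorem exists_extension_meeting_sigma_compact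
    {Z : Type*} [TopologicalSpace Z] [CompactSpace Z] [T2Space Z]
    (X : Set Z) (F : ℕ → Set Z) (hF : ∀ i, IsCompact (F i)) (hXF : X ⊆ ⋃ i, F i)
    (σ : IStrategy Z) (hσ : WinningStrategyI Xᶜ σ)
    (k : ℕ) (V : ℕ → Set Z) (hV : ∀ i ≤ k, LegalAt σ V i) :
    ∃ m > k, ∃ W : ℕ → Set Z, (∀ i ≤ k, W i = V i) ∧ (∀ i ≤ m, LegalAt σ W i) ∧
      ((σ.move (m + 1) W).1 ∩ ⋃ i, F i).Nonempty := by
  classical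
  by_contra hcon
  push_neg at hcon
  obtain ⟨hval, hwin⟩ := hσ
  -- the choice of II's shrunken move at stage `n` given prefix `P`
  let pick : ℕ → (ℕ → Set Z) → Set Z := fun n P =>
    if h : ∃ G : Set Z, IsOpen G ∧ (σ.move n P).1 ⊆ G ∧ closure G ⊆ (σ.move n P).2 ∧
        ∀ j, n = k + 2 + j → closure G ∩ F j = ∅ then h.choose else ∅
  have pick_spec : ∀ n P, (∃ G : Set Z, IsOpen G ∧ (σ.move n P).1 ⊆ G ∧
        closure G ⊆ (σ.move n P).2 ∧ ∀ j, n = k + 2 + j → closure G ∩ F j = ∅) →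
      IsOpen (pick n P) ∧ (σ.move n P).1 ⊆ pick n P ∧ closure (pick n P) ⊆ (σ.move n P).2 ∧
        ∀ j, n = k + 2 + j → closure (pick n P) ∩ F j = ∅ := by
    intro n P h
    simp only [pick, dif_pos h]
    exact h.choose_spec
  -- iterated plays
  let g : ℕ → ℕ → Set Z := fun n =>
    Nat.rec V (fun n P => Function.update P (k + 1 + n) (pick (k + 1 + n) P)) n
  have gsucc : ∀ n, g (n + 1) = Function.update (g n) (k + 1 + n) (pick (k + 1 + n) (g n)) :=
    fun n => rfl
  have gstab : ∀ m n, n ≤ m → ∀ i, i < k + 1 + n → g m i = g n i := by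
    intro m
    induction m with
    | zero => intro n hn i _; rw [Nat.le_zero.mp hn]
    | succ m ih =>
      intro n hn i hi
      rcases Nat.lt_succ_iff_lt_or_eq.mp (Nat.lt_succ_of_le hn) with h | h
      · have hne : i ≠ k + 1 + m := by omega
        rw [gsucc m, Function.update_of_ne hne]
        exact ih n (by omega) i hi
      · rw [h]
  set Wp : ℕ → Set Z := fun i => g (i + 1) i with hWp
  have Wg : ∀ n i, i < k + 1 + n → Wp i = g n i := by
    intro n i hi
    show g (i + 1) i = g n i
    rcases le_total n (i + 1) with h | h
    · exact gstab (i + 1) n h i hi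
    · exact (gstab n (i + 1) h i (by omega)).symm
  have WV : ∀ i, i ≤ k → Wp i = V i := by
    intro i hi
    have := Wg 0 i (by omega)
    exact this
  have moveW : ∀ n m, n ≤ k + 1 + m → σ.move n Wp = σ.move n (g m) := by
    intro n m h
    exact σ.prefix_dep n _ _ (fun i hi => Wg m i (by omega))
  have moveWV : ∀ n, n ≤ k → σ.move n Wp = σ.move n V := by
    intro n h
    exact σ.prefix_dep n _ _ (fun i hi => WV i (by omega))
  -- main induction: legality plus the shrinking properties
  have main : ∀ n, (∀ i ≤ k + n, LegalAt σ Wp i) ∧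
      (∀ j, k + 1 + j ≤ k + n → closure (Wp (k + 1 + j)) ⊆ (σ.move (k + 1 + j) Wp).2 ∧
        ∀ i, k + 1 + j = k + 2 + i → closure (Wp (k + 1 + j)) ∩ F i = ∅) := by
    intro n
    induction n with
    | zero =>
      refine ⟨fun i hi => ?_, fun j hj => absurd hj (by omega)⟩
      have h1 := hV i (by omega)
      unfold LegalAt at h1 ⊢
      rw [moveWV i (by omega), WV i (by omega)]
      exact h1
    | succ n ih =>
      have hleg : ∀ i < k + 1 + n, LegalAt σ Wp i := fun i hi => ih.1 i (by omega)
      have hvalid := hval (k + 1 + n) Wp hleg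
      have hKF : ∀ j, k + 1 + n = k + 2 + j → (σ.move (k + 1 + n) Wp).1 ∩ F j = ∅ := by
        intro j hj
        have hm := hcon (k + 1 + j) (by omega) Wp (fun i hi => WV i hi)
          (fun i hi => ih.1 i (by omega))
        rw [show k + 1 + j + 1 = k + 1 + n from by omega] at hm
        apply Set.eq_empty_of_subset_empty
        rw [← hm]
        exact Set.inter_subset_inter_right _ (Set.subset_iUnion F j)
      have hmv : σ.move (k + 1 + n) (g n) = σ.move (k + 1 + n) Wp :=
        (moveW (k + 1 + n) n le_rfl).symm
      have hex : ∃ G : Set Z, IsOpen G ∧ (σ.move (k + 1 + n) (g n)).1 ⊆ G ∧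
          closure G ⊆ (σ.move (k + 1 + n) (g n)).2 ∧
          ∀ j, k + 1 + n = k + 2 + j → closure G ∩ F j = ∅ := by
        rw [hmv]
        rcases n with _ | n'
        · obtain ⟨G, hGo, hKG, hGU⟩ := normal_exists_closure_subset
            hvalid.2.1.isClosed hvalid.2.2.1 hvalid.2.2.2.1
          exact ⟨G, hGo, hKG, hGU, fun j hj => absurd hj (by omega)⟩
        · have hdisj := hKF n' (by omega)
          have hKO : (σ.move (k + 1 + (n' + 1)) Wp).1 ⊆
              (σ.move (k + 1 + (n' + 1)) Wp).2 ∩ (F n')ᶜ := by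
            intro x hx
            refine ⟨hvalid.2.2.2.1 hx, fun hxF => ?_⟩
            have : x ∈ (σ.move (k + 1 + (n' + 1)) Wp).1 ∩ F n' := ⟨hx, hxF⟩
            rw [hdisj] at this
            exact this
          obtain ⟨G, hGo, hKG, hGU⟩ := normal_exists_closure_subset
            hvalid.2.1.isClosed (hvalid.2.2.1.inter (hF n').isClosed.isOpen_compl) hKO
          refine ⟨G, hGo, hKG, hGU.trans (Set.inter_subset_left), fun j hj => ?_⟩
          have hjn : j = n' := by omega
          subst hjn
          apply Set.eq_empty_of_subset_empty
          intro x hx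
          exact (hGU hx.1).2 hx.2
      have hWps : Wp (k + 1 + n) = pick (k + 1 + n) (g n) := by
        have h1 := Wg (n + 1) (k + 1 + n) (by omega)
        rw [h1, gsucc n, Function.update_self]
      have hps := pick_spec (k + 1 + n) (g n) hex
      rw [hmv, ← hWps] at hps
      obtain ⟨hpo, hpK, hpU, hpF⟩ := hps
      refine ⟨fun i hi => ?_, fun j hj => ?_⟩
      · rcases Nat.lt_or_ge i (k + 1 + n) with h | h
        · exact ih.1 i (by omega)
        · have hieq : i = k + 1 + n := by omega
          subst hieq
          exact ⟨hpo, hpK, subset_closure.trans hpU⟩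
      · rcases Nat.lt_or_ge j n with h | h
        · exact ih.2 j (by omega)
        · have hjeq : j = n := by omega
          subst hjeq
          exact ⟨hpU, hpF⟩
  have hlegal : ∀ i, LegalAt σ Wp i := fun i => (main i).1 i (by omega)
  have hvalid : ∀ n, (σ.move n Wp).1.Nonempty ∧ IsCompact (σ.move n Wp).1 ∧
      IsOpen (σ.move n Wp).2 ∧ (σ.move n Wp).1 ⊆ (σ.move n Wp).2 ∧
      (n = 0 → (σ.move n Wp).1 ⊆ Xᶜ) ∧
      (∀ m, n = m + 1 → (σ.move n Wp).2 ⊆ Wp m) :=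
    fun n => hval n Wp (fun i _ => hlegal i)
  have hcl : ∀ n, closure (Wp (k + 1 + n)) ⊆ (σ.move (k + 1 + n) Wp).2 :=
    fun n => ((main (n + 1)).2 n (by omega)).1
  have hav : ∀ n, closure (Wp (k + 2 + n)) ∩ F n = ∅ := by
    intro n
    have h := ((main (n + 2)).2 (n + 1) (by omega)).2 n (by omega)
    rwa [show k + 1 + (n + 1) = k + 2 + n from by omega] at h
  -- the decreasing sequence of closures
  set t : ℕ → Set Z := fun n => closure (Wp (k + 1 + n)) with ht
  have htd : ∀ n, t (n + 1) ⊆ t n := by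
    intro n
    show closure (Wp (k + 1 + (n + 1))) ⊆ closure (Wp (k + 1 + n))
    apply closure_minimal _ isClosed_closure
    have h1 : Wp (k + 1 + (n + 1)) ⊆ (σ.move (k + 1 + (n + 1)) Wp).2 :=
      (hlegal (k + 1 + (n + 1))).2.2
    have h2 : (σ.move (k + 1 + (n + 1)) Wp).2 ⊆ Wp (k + 1 + n) :=
      (hvalid (k + 1 + (n + 1))).2.2.2.2.2 (k + 1 + n) rfl
    exact (h1.trans h2).trans subset_closure
  have htn : ∀ n, (t n).Nonempty := by
    intro n
    obtain ⟨x, hx⟩ := (hvalid (k + 1 + n)).1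
    exact ⟨x, subset_closure ((hlegal (k + 1 + n)).2.1 hx)⟩
  obtain ⟨x, hx⟩ := IsCompact.nonempty_iInter_of_sequence_nonempty_isCompact_isClosed t htd htn
    isClosed_closure.isCompact (fun _ => isClosed_closure)
  -- everything in ⋂ t lies in ⋂ U
  have hUmem : ∀ y, y ∈ ⋂ n, t n → ∀ n, y ∈ (σ.move n Wp).2 := by
    intro y hy
    have hup : ∀ j, y ∈ (σ.move (k + 1 + j) Wp).2 :=
      fun j => hcl j (Set.mem_iInter.mp hy j)
    have hdown : ∀ n, y ∈ (σ.move (n + 1) Wp).2 → y ∈ (σ.move n Wp).2 := by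
      intro n h
      exact (hlegal n).2.2 ((hvalid (n + 1)).2.2.2.2.2 n rfl h)
    have hdec : ∀ m n, n ≤ m → y ∈ (σ.move m Wp).2 → y ∈ (σ.move n Wp).2 := by
      intro m
      induction m with
      | zero => intro n hn h; rwa [Nat.le_zero.mp hn]
      | succ m ih =>
        intro n hn h
        rcases Nat.lt_succ_iff_lt_or_eq.mp (Nat.lt_succ_of_le hn) with h' | h'
        · exact ih n (by omega) (hdown m h)
        · rwa [h']
    intro n
    exact hdec (k + 1 + n) n (by omega) (hup n)
  have hxU : ∀ n, x ∈ (σ.move n Wp).2 := hUmem x hx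
  have hsub : (⋂ n, (σ.move n Wp).2) ⊆ Xᶜ := by
    intro y hy hyX
    obtain ⟨_, ⟨i, rfl⟩, hyF⟩ := hXF hyX
    have h1 : y ∈ (σ.move (k + 3 + i) Wp).2 := Set.mem_iInter.mp hy _
    have h2 : y ∈ Wp (k + 2 + i) :=
      (hvalid (k + 3 + i)).2.2.2.2.2 (k + 2 + i) (by omega) h1
    have h3 : y ∈ closure (Wp (k + 2 + i)) ∩ F i := ⟨subset_closure h2, hyF⟩
    rw [hav i] at h3
    exact h3
  exact hwin Wp hlegal ⟨⟨x, Set.mem_iInter.mpr hxU⟩, hsub⟩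
end
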